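/- arXiv:1906.11030 — 5 statements merged into one kernel-verified Lean document; each statement's English description precedes it below -/
import Mathlib

section
/- Property P1 implies property P2: if a string U over Σ∪{#} satisfies P1 (t-chain equivalence I_W ≡ I_U), then for every length-k string P over Σ that is not a sensitive pattern, Freq_U(P) = Freq_W(P). -/
/-- Number of occurrences (starting positions) of `P` as a substring of `T`. -/
def strFreq {α : Type*} [DecidableEq α] (T P : List α) : ℕ :=
  ((Finset.range (T.length + 1 - P.length)).filter
    (fun i => (T.drop i).take P.length = P)).card

/-- Strings over `Σ ∪ {#}` are modelled as lists over `Option α`, where `none` is the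
separator `#` and `some a` (for `a : α`) is a letter of `Σ`.
`IUset W S k U` is the set `I_U` of positions `i` of `U` such that `U[i..i+k−1]` is a
length-`k` string over `Σ` which is not a sensitive pattern (a sensitive pattern being a
string of the form `W[j..j+k−1]` with `j ∈ S`). -/
def IUset {α : Type*} [DecidableEq α] (W : List α) (S : Finset ℕ) (k : ℕ)
    (U : List (Option α)) : Finset ℕ :=
  (Finset.range (U.length + 1 - k)).filter (fun i =>
    (∀ x ∈ (U.drop i).take k, x ≠ none) ∧
    ¬ ∃ j ∈ S, ((U.drop i).take k).reduceOption = (W.drop j).take k)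

/-- Property C1: no sensitive pattern occurs in `U`. -/
def PropC1 {α : Type*} [DecidableEq α] (W : List α) (S : Finset ℕ) (k : ℕ)
    (U : List (Option α)) : Prop :=
  ∀ j ∈ S, ¬ ((((W.drop j).take k).map some) <:+: U)

/-- Property P1 (t-chain equivalence `I_W ≡ I_U`): the two sets of positions have the same
cardinality and, for every `j`, the length-`k` substring of `U` at the `j`-th smallest
position of `I_U` equals the length-`k` substring of `W` at the `j`-th smallest position
of `I_W`. -/
def PropP1 {α : Type*} [DecidableEq α] (W : List α) (S : Finset ℕ) (k : ℕ)
    (U : List (Option α)) : Prop :=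
  (IUset W S k (W.map some)).card = (IUset W S k U).card ∧
  ∀ j < (IUset W S k (W.map some)).card,
    (U.drop (((IUset W S k U).sort (· ≤ ·)).getD j 0)).take k =
    ((W.map some).drop (((IUset W S k (W.map some)).sort (· ≤ ·)).getD j 0)).take k

/-- Property P2: every length-`k` string over `Σ` that is not a sensitive pattern occurs
equally often in `U` and in `W`. -/
def PropP2 {α : Type*} [DecidableEq α] (W : List α) (S : Finset ℕ) (k : ℕ)
    (U : List (Option α)) : Prop :=
  ∀ P : List α, P.length = k → (∀ j ∈ S, P ≠ (W.drop j).take k) →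
    strFreq U (P.map some) = strFreq W P

/-- `i` is the p-predecessor of `j` in the set of positions `F` (w.r.t. the string `U`):
`i` is the largest element of `F` smaller than `j`, and the length-`k` substrings of `U`
at `i` and `j` have a suffix-prefix overlap of length `k−1`. -/
def IsPPred {α : Type*} (U : List (Option α)) (k : ℕ) (F : Finset ℕ) (i j : ℕ) : Prop :=
  i ∈ F ∧ j ∈ F ∧ i < j ∧ (∀ m ∈ F, m < j → m ≤ i) ∧
  (U.drop (i + 1)).take (k - 1) = (U.drop j).take (k - 1)

/-- A p-chain of `F`: a subset `J ⊆ F` such that every element of `J` other than its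
minimum has its p-predecessor in `J`. -/
def IsPChain {α : Type*} (U : List (Option α)) (k : ℕ) (F : Finset ℕ)
    (J : Finset ℕ) : Prop :=
  J ⊆ F ∧ ∀ x ∈ J, (∀ y ∈ J, x ≤ y) ∨ ∃ i ∈ J, IsPPred U k F i x

/-- Equivalence of chains: same cardinality, and position-wise (in increasing order) the
length-`k` substrings agree. -/
def ChainEquiv {α : Type*} [DecidableEq α] (U V : List (Option α)) (k : ℕ)
    (JU JV : Finset ℕ) : Prop :=
  JU.card = JV.card ∧
  ∀ j < JU.card,
    (U.drop ((JU.sort (· ≤ ·)).getD j 0)).take k =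
    (V.drop ((JV.sort (· ≤ ·)).getD j 0)).take k

/-- Property Π1: there is an injective map from the p-chains of `I_W` to the p-chains of
`I_U` sending every p-chain to an equivalent one. -/
def PropPi1 {α : Type*} [DecidableEq α] (W : List α) (S : Finset ℕ) (k : ℕ)
    (U : List (Option α)) : Prop :=
  ∃ f : {J : Finset ℕ // IsPChain (W.map some) k (IUset W S k (W.map some)) J} →
        {J : Finset ℕ // IsPChain U k (IUset W S k U) J},
    Function.Injective f ∧
    ∀ J, ChainEquiv (W.map some) U k J.1 (f J).1

/-
Every occurrence of a non-sensitive length-`k` pattern `P` (over `Σ`) starts at a position of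
`I_U`, so `Freq_U(P)` is the number of times `P` appears in the list of windows of `U` read at
the positions of `I_U` in increasing order, and likewise for `W`. Property P1 says precisely that
these two lists of windows coincide.
-/

lemma List.reduceOption_map_some {α : Type*} (l : List α) : (l.map some).reduceOption = l := by
  induction l <;> simp [*]

lemma strFreq_map_some {α : Type*} [DecidableEq α] (T P : List α) :
    strFreq (T.map some) (P.map some) = strFreq T P := by
  unfold strFreq
  simp only [List.length_map, ← List.map_drop, ← List.map_take,
    (List.map_injective_iff.mpr (Option.some_injective α)).eq_iff]

lemma Finset.card_filter_eq_count_map_sort {γ β : Type*} [LinearOrder γ] [DecidableEq β]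
    (F : Finset γ) (f : γ → β) (b : β) :
    (F.filter (fun i => f i = b)).card = ((F.sort (· ≤ ·)).map f).count b := by
  rw [← Multiset.coe_count, ← Multiset.map_coe, Finset.sort_eq, Multiset.count_map]
  simp only [Finset.card, Finset.filter_val, eq_comm]

lemma strFreq_eq_card_filter_IUset {α : Type*} [DecidableEq α] (W : List α) (S : Finset ℕ)
    (k : ℕ) (V : List (Option α)) (P : List α) (hPlen : P.length = k)
    (hPns : ∀ j ∈ S, P ≠ (W.drop j).take k) :
    strFreq V (P.map some) =
      ((IUset W S k V).filter (fun i => (V.drop i).take k = P.map some)).card := by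
  rw [IUset, Finset.filter_filter, strFreq, List.length_map, hPlen]
  refine congrArg Finset.card (Finset.filter_congr fun i _ => ?_)
  constructor
  · intro hwin
    refine ⟨⟨?_, ?_⟩, hwin⟩
    · simp [hwin]
    · rw [hwin, List.reduceOption_map_some]
      rintro ⟨j, hj, hPj⟩
      exact hPns j hj hPj
  · exact And.right

lemma PropP1.map_sort_windows_eq {α : Type*} [DecidableEq α] {W : List α} {S : Finset ℕ}
    {k : ℕ} {U : List (Option α)} (hP1 : PropP1 W S k U) :
    ((IUset W S k U).sort (· ≤ ·)).map (fun i => (U.drop i).take k) =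
      ((IUset W S k (W.map some)).sort (· ≤ ·)).map
        (fun i => ((W.map some).drop i).take k) := by
  obtain ⟨hcard, hwindows⟩ := hP1
  apply List.ext_getElem
  · simp [hcard]
  · intro j hjU hjW
    have hj : j < (IUset W S k (W.map some)).card := by simpa using hjW
    have := hwindows j hj
    rw [List.getD_eq_getElem _ _ (List.length_map _ ▸ hjU),
      List.getD_eq_getElem _ _ (List.length_map _ ▸ hjW)] at this
    simpa only [List.getElem_map] using this

theorem stmt3_general {α : Type*} [DecidableEq α] (W : List α) (k : ℕ)
    (S : Finset ℕ)
    (U : List (Option α)) (hP1 : PropP1 W S k U) :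
    PropP2 W S k U := by
  intro P hPlen hPns
  rw [← strFreq_map_some W P,
    strFreq_eq_card_filter_IUset W S k U P hPlen hPns,
    strFreq_eq_card_filter_IUset W S k (W.map some) P hPlen hPns,
    Finset.card_filter_eq_count_map_sort, Finset.card_filter_eq_count_map_sort,
    hP1.map_sort_windows_eq]

/-- property P1 implies property P2. Here `W` is a string of length `n` over
the finite alphabet `Σ = α`, `0 < k < n`, and `S ⊆ {0,…,n−k}` (the set of occurrences of
sensitive patterns) is closed under pattern equality. If a string `U` over `Σ ∪ {#}`
satisfies P1, then for every length-`k` string `P` over `Σ` that is not a sensitive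
pattern, `Freq_U(P) = Freq_W(P)`. -/
theorem stmt3 {α : Type*} [Fintype α] [DecidableEq α] (W : List α) (n k : ℕ)
    (hn : W.length = n) (hk0 : 0 < k) (hkn : k < n)
    (S : Finset ℕ) (hSrange : ∀ i ∈ S, i ≤ n - k)
    (hSclosed : ∀ i ∈ S, ∀ j, j ≤ n - k →
      (W.drop j).take k = (W.drop i).take k → j ∈ S)
    (U : List (Option α)) (hP1 : PropP1 W S k U) :
    PropP2 W S k U :=
  stmt3_general W k S U hP1
end

section
/- Property P1 implies property Π1: if a string U over Σ∪{#} satisfies P1 (t-chain equivalence I_W ≡ I_U), then there exists an injective function f from the p-chains of I_W to the p-chains of I_U such that f(J) is equivalent to J for every p-chain J of I_W. -/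
/-!
P1 says that the increasing bijection `g : I_W → I_U` preserves the length-`k` window at
every position. Whether `i` is the p-predecessor of `j` depends only on the order of the
positions and on the windows at `i` and `j`, so `g` maps p-predecessors to p-predecessors.
Hence `J ↦ g(J)` sends p-chains of `I_W` to equivalent p-chains of `I_U`, injectively since
`g` is injective.
-/

namespace Finset

theorem sort_image_of_strictMonoOn {α β : Type*} [LinearOrder α] [LinearOrder β]
    {f : α → β} {s : Finset α} (hf : StrictMonoOn f s) :
    (s.image f).sort = s.sort.map f := by
  rw [← sort_val, image_val_of_injOn hf.injOn]
  exact (Multiset.map_sort _ _ _ _ fun _ ha _ hb => (hf.le_iff_le ha hb).symm).symm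

variable {A B : Finset ℕ} {i j x : ℕ}

theorem sort_getD_mem (hj : j < A.card) : A.sort.getD j 0 ∈ A := by
  rw [List.getD_eq_getElem _ _ (by rwa [length_sort])]
  exact (mem_sort _).1 (List.getElem_mem _)

theorem sort_getD_lt_sort_getD (hij : i < j) (hj : j < A.card) :
    A.sort.getD i 0 < A.sort.getD j 0 := by
  have hj' : j < A.sort.length := by rwa [length_sort]
  rw [List.getD_eq_getElem _ _ (hij.trans hj'), List.getD_eq_getElem _ _ hj']
  exact A.sortedLT_sort.getElem_lt_getElem_of_lt hij

theorem exists_sort_getD_eq (hx : x ∈ A) : ∃ j < A.card, A.sort.getD j 0 = x := by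
  obtain ⟨j, hj, rfl⟩ := List.getElem_of_mem ((mem_sort (· ≤ ·)).2 hx)
  exact ⟨j, by rwa [length_sort] at hj, List.getD_eq_getElem _ _ hj⟩

def sortTransfer (A B : Finset ℕ) (x : ℕ) : ℕ :=
  B.sort.getD (A.sort.idxOf x) 0

theorem sortTransfer_sort_getD (hj : j < A.card) :
    sortTransfer A B (A.sort.getD j 0) = B.sort.getD j 0 := by
  have hj' : j < A.sort.length := by rwa [length_sort]
  rw [sortTransfer, List.getD_eq_getElem _ _ hj', (sort_nodup A _).idxOf_getElem]

theorem mapsTo_sortTransfer (h : A.card ≤ B.card) :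
    Set.MapsTo (sortTransfer A B) A B := by
  intro x hx
  obtain ⟨j, hj, rfl⟩ := exists_sort_getD_eq hx
  rw [sortTransfer_sort_getD hj]
  exact sort_getD_mem (hj.trans_le h)

theorem strictMonoOn_sortTransfer (h : A.card ≤ B.card) :
    StrictMonoOn (sortTransfer A B) A := by
  intro x hx y hy hxy
  obtain ⟨i, hi, rfl⟩ := exists_sort_getD_eq hx
  obtain ⟨j, hj, rfl⟩ := exists_sort_getD_eq hy
  have hij : i < j := by
    by_contra! hji
    obtain rfl | hji := hji.eq_or_lt
    · exact hxy.false
    · exact (sort_getD_lt_sort_getD hji hi).asymm hxy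
  rw [sortTransfer_sort_getD hi, sortTransfer_sort_getD hj]
  exact sort_getD_lt_sort_getD hij (hj.trans_le h)

theorem surjOn_sortTransfer (h : B.card ≤ A.card) :
    Set.SurjOn (sortTransfer A B) A B := by
  intro y hy
  obtain ⟨j, hj, rfl⟩ := exists_sort_getD_eq hy
  exact ⟨_, sort_getD_mem (hj.trans_le h), sortTransfer_sort_getD (hj.trans_le h)⟩

end Finset

open Finset

section WindowTransfer

variable {α : Type*} {X Y : List (Option α)} {k : ℕ} {A B : Finset ℕ} {g : ℕ → ℕ}

theorem List.drop_succ_take_pred (L : List α) (i k : ℕ) :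
    (L.drop (i + 1)).take (k - 1) = ((L.drop i).take k).drop 1 := by
  rw [List.drop_take, List.drop_drop]

structure WindowIso (X Y : List (Option α)) (k : ℕ) (A B : Finset ℕ) (g : ℕ → ℕ) : Prop where
  mapsTo : Set.MapsTo g A B
  surjOn : Set.SurjOn g A B
  strictMonoOn : StrictMonoOn g A
  window_eq : ∀ x ∈ A, (Y.drop (g x)).take k = (X.drop x).take k

namespace WindowIso

theorem isPPred (h : WindowIso X Y k A B g) {i x : ℕ} (hix : IsPPred X k A i x) :
    IsPPred Y k B (g i) (g x) := by
  obtain ⟨hi, hx, hlt, hmax, hov⟩ := hix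
  refine ⟨h.mapsTo hi, h.mapsTo hx, h.strictMonoOn hi hx hlt, ?_, ?_⟩
  · intro _ hm' hmx
    obtain ⟨m, hm, rfl⟩ := h.surjOn hm'
    exact h.strictMonoOn.monotoneOn hm hi (hmax m hm ((h.strictMonoOn.lt_iff_lt hm hx).1 hmx))
  · have hpref : ∀ (L : List (Option α)) p,
        (L.drop p).take (k - 1) = ((L.drop p).take k).take (k - 1) :=
      fun L p => by rw [List.take_take, min_eq_left (Nat.sub_le k 1)]
    rw [List.drop_succ_take_pred, hpref, h.window_eq i hi, h.window_eq x hx, ← hpref,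
      ← List.drop_succ_take_pred]
    exact hov

theorem isPChain_image (h : WindowIso X Y k A B g) {J : Finset ℕ} (hJ : IsPChain X k A J) :
    IsPChain Y k B (J.image g) := by
  obtain ⟨hJA, hJ⟩ := hJ
  refine ⟨fun y hy => ?_, ?_⟩
  · obtain ⟨x, hx, rfl⟩ := mem_image.1 hy
    exact h.mapsTo (hJA hx)
  · simp only [forall_mem_image]
    intro x hx
    rcases hJ x hx with hmin | ⟨i, hi, hpred⟩
    · exact .inl fun y hy => h.strictMonoOn.monotoneOn (hJA hx) (hJA hy) (hmin y hy)
    · exact .inr ⟨g i, mem_image_of_mem g hi, h.isPPred hpred⟩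

theorem chainEquiv_image [DecidableEq α] (h : WindowIso X Y k A B g) {J : Finset ℕ}
    (hJ : J ⊆ A) : ChainEquiv X Y k J (J.image g) := by
  have hmonoJ : StrictMonoOn g J := h.strictMonoOn.mono (coe_subset.2 hJ)
  refine ⟨(card_image_of_injOn hmonoJ.injOn).symm, fun j hj => ?_⟩
  have hj' : j < J.sort.length := by rwa [length_sort]
  have hget : (J.sort.map g).getD j 0 = g (J.sort.getD j 0) := by
    rw [List.getD_eq_getElem _ _ (by simpa using hj'), List.getElem_map,
      List.getD_eq_getElem _ _ hj']
  rw [sort_image_of_strictMonoOn hmonoJ, hget, h.window_eq _ (hJ (sort_getD_mem hj))]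

theorem image_injOn (h : WindowIso X Y k A B g) {J₁ J₂ : Finset ℕ} (h₁ : J₁ ⊆ A) (h₂ : J₂ ⊆ A)
    (himage : J₁.image g = J₂.image g) : J₁ = J₂ := by
  rw [← coe_inj, ← h.strictMonoOn.injOn.image_eq_image_iff (coe_subset.2 h₁) (coe_subset.2 h₂),
    ← coe_image, ← coe_image, himage]

end WindowIso

end WindowTransfer

theorem PropP1.windowIso {α : Type*} [DecidableEq α] {W : List α} {S : Finset ℕ} {k : ℕ}
    {U : List (Option α)} (h : PropP1 W S k U) :
    WindowIso (W.map some) U k (IUset W S k (W.map some)) (IUset W S k U)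
      (sortTransfer (IUset W S k (W.map some)) (IUset W S k U)) := by
  obtain ⟨hcard, hwin⟩ := h
  refine ⟨mapsTo_sortTransfer hcard.le, surjOn_sortTransfer hcard.ge,
    strictMonoOn_sortTransfer hcard.le, fun x hx => ?_⟩
  obtain ⟨j, hj, rfl⟩ := exists_sort_getD_eq hx
  rw [sortTransfer_sort_getD hj]
  exact hwin j hj

theorem stmt4_general {α : Type*} [DecidableEq α] (W : List α) (k : ℕ) (S : Finset ℕ)
    (U : List (Option α)) (hP1 : PropP1 W S k U) :
    PropPi1 W S k U := by
  have hiso := hP1.windowIso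
  exact ⟨fun J => ⟨J.1.image _, hiso.isPChain_image J.2⟩,
    fun J₁ J₂ h => Subtype.ext (hiso.image_injOn J₁.2.1 J₂.2.1 (congrArg Subtype.val h)),
    fun J => hiso.chainEquiv_image J.2.1⟩

/-- property P1 implies property Π1. Here `W` is a string of length `n` over
the finite alphabet `Σ = α`, `0 < k < n`, and `S ⊆ {0,…,n−k}` is closed under pattern
equality. If a string `U` over `Σ ∪ {#}` satisfies P1, then there exists an injective
function from the p-chains of `I_W` to the p-chains of `I_U` mapping every p-chain of
`I_W` to an equivalent p-chain of `I_U`. -/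
theorem stmt4 {α : Type*} [Fintype α] [DecidableEq α] (W : List α) (n k : ℕ)
    (hn : W.length = n) (hk0 : 0 < k) (hkn : k < n)
    (S : Finset ℕ) (hSrange : ∀ i ∈ S, i ≤ n - k)
    (hSclosed : ∀ i ∈ S, ∀ j, j ≤ n - k →
      (W.drop j).take k = (W.drop i).take k → j ∈ S)
    (U : List (Option α)) (hP1 : PropP1 W S k U) :
    PropPi1 W S k U :=
  stmt4_general W k S U hP1
end

section
/- There exists a string X over Σ∪{#} satisfying properties C1, P1 and P2 such that: (i) |X| ≤ ⌈(n−k+1)/2⌉·k + ⌊(n−k+1)/2⌋; (ii) the letter # occurs at most ⌊(n−k+1)/2⌋ times in X; (iii) every occurrence of # in X is followed by at least k letters, so in particular any two occurrences of # are at least k+1 positions apart and X does not end with #; and (iv) X does not begin with #. -/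
/-!
List the non-sensitive positions of `W` in increasing order and glue their length-`k` windows:
when the next position is adjacent, a window contributes only its first letter (the next window
continues it); otherwise it is written out in full and followed by `#`. The `#`-free length-`k`
windows of the glued string are then exactly the windows of `W` at these positions, in the same
order, which yields C1, P1 and P2 at once, and every `#` is followed by a full window.
A `#` costs `k + 1` symbols but needs a gap between consecutive positions, so it uses up at least
two of the `n - k + 1` possible positions, whereas an adjacent step costs one symbol per position;
this gives the bounds on the length and on the number of `#`.
-/

namespace StringSanitization

section Windows

variable {β : Type*}

def window (U : List β) (k p : ℕ) : List β := (U.drop p).take k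

variable {sep : β} {U : List β} {k : ℕ}

theorem window_cons_succ (a : β) (p : ℕ) :
    window (a :: U) k (p + 1) = window U k p := rfl

theorem length_window {p : ℕ} (h : p + k ≤ U.length) :
    (window U k p).length = k := by
  simp [window]; omega

theorem mem_of_mem_window {p : ℕ} {a : β} (h : a ∈ window U k p) : a ∈ U :=
  List.drop_subset _ _ (List.take_subset _ _ h)

theorem window_append_of_length_le {A V : List β} (h : k ≤ A.length) :
    window (A ++ V) k 0 = window A k 0 := by
  simp [window, List.take_append, Nat.sub_eq_zero_of_le h]

theorem window_append_add_length (A V : List β) (p : ℕ) :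
    window (A ++ V) k (p + A.length) = window V k p := by
  rw [window, Nat.add_comm, ← List.drop_drop, List.drop_append_length]; rfl

theorem window_eq_of_prefix {w X : List β} (h : w <+: X) : window X w.length 0 = w :=
  (List.prefix_iff_eq_take.mp h).symm

theorem window_eq_window_one_append (hk : 0 < k) (i : ℕ) :
    window U k i = window U 1 i ++ window U (k - 1) (i + 1) := by
  obtain ⟨k, rfl⟩ : ∃ k', k = k' + 1 := ⟨k - 1, by omega⟩
  rw [window, window, window, Nat.add_sub_cancel, Nat.add_comm k 1, List.take_add,
    List.drop_drop]

theorem window_one_eq {i : ℕ} (hi : i < U.length) : window U 1 i = [U[i]] := by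
  rw [window, List.drop_eq_getElem_cons hi]
  rfl

theorem window_map {γ : Type*} (f : β → γ) (p : ℕ) :
    window (U.map f) k p = (window U k p).map f := by
  simp [window, List.map_drop, List.map_take]

theorem sep_not_mem_window_append_sep {A V : List β} :
    sep ∉ window (A ++ sep :: V) k 0 ↔ k ≤ A.length ∧ sep ∉ window A k 0 := by
  by_cases hk : k ≤ A.length
  · simp [window_append_of_length_le hk, hk]
  · obtain ⟨r, hr⟩ : ∃ r, k - A.length = r + 1 := ⟨k - A.length - 1, by omega⟩
    simp [window, List.take_append, hr, hk]

theorem suffix_of_cons_suffix_append {A V Y : List β} (hA : sep ∉ A)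
    (h : sep :: V <:+ A ++ Y) : sep :: V <:+ Y := by
  induction A with
  | nil => exact h
  | cons a A ih =>
    rcases List.suffix_cons_iff.mp h with h | h
    · exact absurd (List.cons_eq_cons.mp h).1 (fun hsa => hA (hsa ▸ List.mem_cons_self))
    · exact ih (fun hs => hA (List.mem_cons_of_mem _ hs)) h

theorem reduceOption_map_some (l : List β) : (l.map some).reduceOption = l := by
  simp [List.reduceOption]

theorem getElem?_eq_sep_spacing {X : List β}
    (hX : ∀ V, sep :: V <:+ X → k ≤ V.length ∧ sep ∉ window V k 0) {i : ℕ}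
    (hi : X[i]? = some sep) :
    i + k + 1 ≤ X.length ∧ ∀ j, i < j → j ≤ i + k → X[j]? ≠ some sep := by
  obtain ⟨hiX, rfl⟩ := List.getElem?_eq_some_iff.mp hi
  have hsuf : X[i] :: X.drop (i + 1) <:+ X := List.drop_eq_getElem_cons hiX ▸ List.drop_suffix i X
  obtain ⟨hlen, hfree⟩ := hX _ hsuf
  simp only [List.length_drop] at hlen
  refine ⟨by omega, fun j hij hjk hj => hfree ?_⟩
  have : (window (X.drop (i + 1)) k 0)[j - (i + 1)]? = some X[i] := by
    rw [window, List.drop_zero, List.getElem?_take_of_lt (by omega), List.getElem?_drop,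
      show i + 1 + (j - (i + 1)) = j by omega, hj]
  exact List.mem_of_getElem? this

end Windows

section SepFreeStarts

variable {β : Type*} [DecidableEq β] (sep : β)

def sepFreeStarts (U : List β) (k : ℕ) : List ℕ :=
  (List.range (U.length + 1 - k)).filter fun p => sep ∉ window U k p

variable {sep} {U : List β} {k : ℕ}

theorem mem_sepFreeStarts {p : ℕ} :
    p ∈ sepFreeStarts sep U k ↔ p + k ≤ U.length ∧ sep ∉ window U k p := by
  simp only [sepFreeStarts, List.mem_filter, List.mem_range, decide_eq_true_eq]
  exact and_congr_left' (by omega)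

theorem pairwise_sepFreeStarts :
    (sepFreeStarts sep U k).Pairwise (· < ·) :=
  List.pairwise_lt_range.filter _

theorem sepFreeStarts_nil (hk : 0 < k) : sepFreeStarts sep [] k = [] := by
  simp [sepFreeStarts, Nat.sub_eq_zero_of_le hk]

theorem sepFreeStarts_cons (a : β) :
    sepFreeStarts sep (a :: U) k =
      (if k ≤ U.length + 1 ∧ sep ∉ window (a :: U) k 0 then [0] else []) ++
        (sepFreeStarts sep U k).map (· + 1) := by
  by_cases hk : k ≤ U.length + 1
  · rw [sepFreeStarts, sepFreeStarts, List.length_cons,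
      show U.length + 1 + 1 - k = U.length + 1 - k + 1 by omega, List.range_succ_eq_map,
      List.filter_cons, List.filter_map]
    by_cases h : sep ∈ window (a :: U) k 0 <;>
      simp [h, hk, Function.comp_def, window_cons_succ] <;> rfl
  · simp [sepFreeStarts, hk, show U.length + 1 + 1 - k = 0 by omega,
      show U.length + 1 - k = 0 by omega]

theorem sepFreeStarts_of_length_eq (hU : U.length = k) (hsep : sep ∉ U) :
    sepFreeStarts sep U k = [0] := by
  simp [sepFreeStarts, ← hU, window, hsep]

theorem sepFreeStarts_append_sep (hk : 0 < k) (A V : List β) :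
    sepFreeStarts sep (A ++ sep :: V) k =
      sepFreeStarts sep A k ++ (sepFreeStarts sep V k).map (· + (A.length + 1)) := by
  induction A with
  | nil =>
    have : sep ∈ window (sep :: V) k 0 := by
      obtain ⟨k, rfl⟩ := Nat.exists_eq_add_of_lt hk
      simp [window]
    simp [sepFreeStarts_cons, this, sepFreeStarts_nil hk]
  | cons a A ih =>
    have hcond :
        (k ≤ (A ++ sep :: V).length + 1 ∧ sep ∉ window (a :: (A ++ sep :: V)) k 0) ↔
          (k ≤ A.length + 1 ∧ sep ∉ window (a :: A) k 0) := by
      rw [← List.cons_append, sep_not_mem_window_append_sep]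
      simp only [List.length_append, List.length_cons]
      constructor
      · exact fun h => h.2
      · exact fun h => ⟨by omega, h⟩
    rw [List.cons_append, sepFreeStarts_cons, sepFreeStarts_cons, if_congr hcond rfl rfl, ih]
    simp [Function.comp_def, Nat.add_assoc]

theorem map_window_sepFreeStarts_cons {a : β} {X w : List β} (hw : w.length = k)
    (hpre : w <+: a :: X) (hsep : sep ∉ w) :
    (sepFreeStarts sep (a :: X) k).map (window (a :: X) k) =
      w :: (sepFreeStarts sep X k).map (window X k) := by
  have hwin : window (a :: X) k 0 = w := hw ▸ window_eq_of_prefix hpre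
  have hlen : k ≤ X.length + 1 := hw ▸ hpre.length_le
  simp [sepFreeStarts_cons, hlen, hwin, hsep, Function.comp_def, window_cons_succ]

theorem map_window_sepFreeStarts_append_sep (hk : 0 < k) {X w : List β} (hw : w.length = k)
    (hsep : sep ∉ w) :
    (sepFreeStarts sep (w ++ sep :: X) k).map (window (w ++ sep :: X) k) =
      w :: (sepFreeStarts sep X k).map (window X k) := by
  have hwin : window (w ++ sep :: X) k 0 = w := by
    rw [window_append_of_length_le hw.ge, ← hw, window_eq_of_prefix (List.prefix_refl w)]
  have hshift (p : ℕ) : window (w ++ sep :: X) k (p + (w.length + 1)) = window X k p := by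
    rw [show p + (w.length + 1) = p + 1 + w.length by omega, window_append_add_length,
      window_cons_succ]
  simp [sepFreeStarts_append_sep hk, sepFreeStarts_of_length_eq hw hsep, hwin,
    Function.comp_def, hshift]

theorem strFreq_eq_countP_sepFreeStarts {P : List β} (hP : P.length = k) (hsep : sep ∉ P) :
    strFreq U P = (sepFreeStarts sep U k).countP (fun p => window U k p = P) := by
  rw [sepFreeStarts, List.countP_eq_length_filter, List.filter_filter, hP.symm]
  refine congrArg List.length (List.filter_congr fun p _ => ?_)
  by_cases h : (U.drop p).take P.length = P <;> simp [h, hsep, window]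

end SepFreeStarts

def spanBound (k m : ℕ) : ℕ := (m + 1) / 2 * k + m / 2

theorem spanBound_one (k : ℕ) : spanBound k 1 = k := by
  simp [spanBound]

theorem spanBound_succ {k : ℕ} (hk : 0 < k) (m : ℕ) :
    spanBound k m + 1 ≤ spanBound k (m + 1) := by
  unfold spanBound
  rcases Nat.even_or_odd' m with ⟨c, rfl | rfl⟩
  · rw [show (2 * c + 1) / 2 = c by omega, show 2 * c / 2 = c by omega,
      show (2 * c + 1 + 1) / 2 = c + 1 by omega, Nat.add_mul]
    omega
  · rw [show (2 * c + 1 + 1) / 2 = c + 1 by omega, show (2 * c + 1) / 2 = c by omega,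
      show (2 * c + 1 + 1 + 1) / 2 = c + 1 by omega]
    omega

theorem spanBound_mono {k : ℕ} (hk : 0 < k) : Monotone (spanBound k) :=
  monotone_nat_of_le_succ fun m => (Nat.le_succ _).trans (spanBound_succ hk m)

theorem spanBound_add_two (k m : ℕ) : spanBound k (m + 2) = spanBound k m + (k + 1) := by
  unfold spanBound
  rw [show (m + 2 + 1) / 2 = (m + 1) / 2 + 1 by omega, show (m + 2) / 2 = m / 2 + 1 by omega]
  ring

theorem head_le_of_pairwise_lt {j x : ℕ} {t : List ℕ} (h : (j :: t).Pairwise (· < ·))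
    (hx : x ∈ j :: t) : j ≤ x := by
  rcases List.mem_cons.mp hx with rfl | hx
  · exact le_rfl
  · exact ((List.pairwise_cons.mp h).1 x hx).le

section Glue

variable {β : Type*}

def glueWindows (sep : β) (U : List β) (k : ℕ) : List ℕ → List β
  | [] => []
  | [i] => window U k i
  | i :: j :: t =>
    if j = i + 1 then window U 1 i ++ glueWindows sep U k (j :: t)
    else window U k i ++ sep :: glueWindows sep U k (j :: t)

variable {sep : β} {U : List β} {k : ℕ}

theorem window_prefix_glueWindows {i : ℕ} {t : List ℕ}
    (hb : ∀ x ∈ i :: t, x + k ≤ U.length) :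
    window U k i <+: glueWindows sep U k (i :: t) := by
  induction t generalizing i with
  | nil => exact List.prefix_refl _
  | cons j t ih =>
    have hj := ih fun x hx => hb x (List.mem_cons_of_mem _ hx)
    rw [glueWindows]
    split_ifs with hij
    · subst hij
      rcases Nat.eq_zero_or_pos k with rfl | hk
      · exact List.nil_prefix
      rw [window_eq_window_one_append hk]
      refine List.prefix_append_right_inj _ |>.mpr (List.IsPrefix.trans ?_ hj)
      exact List.take_prefix_take_left (Nat.sub_le k 1)
    · exact List.prefix_append _ _

theorem map_window_sepFreeStarts_glueWindows [DecidableEq β] (hk : 0 < k) (hsep : sep ∉ U)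
    {l : List ℕ} (hb : ∀ x ∈ l, x + k ≤ U.length) :
    (sepFreeStarts sep (glueWindows sep U k l) k).map (window (glueWindows sep U k l) k) =
      l.map (window U k) := by
  have hfree (i : ℕ) : sep ∉ window U k i := fun h => hsep (mem_of_mem_window h)
  fun_induction glueWindows sep U k l with
  | case1 => simp [sepFreeStarts_nil hk]
  | case2 i =>
    have hlen := length_window (hb i (List.mem_singleton_self i))
    have := window_eq_of_prefix (List.prefix_refl (window U k i))
    rw [hlen] at this
    simp [sepFreeStarts_of_length_eq hlen (hfree i), this]
  | case3 i t ih =>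
    have hpre := window_prefix_glueWindows (sep := sep) hb
    rw [glueWindows, if_pos rfl] at hpre
    have hi : i < U.length := by have := hb i (by simp); omega
    rw [window_one_eq hi] at hpre ⊢
    rw [List.singleton_append] at hpre ⊢
    rw [map_window_sepFreeStarts_cons (length_window (hb i (by simp))) hpre (hfree i),
      ih fun x hx => hb x (List.mem_cons_of_mem _ hx)]
    rfl
  | case4 i j t hij ih =>
    rw [map_window_sepFreeStarts_append_sep hk (length_window (hb i (by simp))) (hfree i),
      ih fun x hx => hb x (List.mem_cons_of_mem _ hx)]
    rfl

theorem sep_suffix_glueWindows (hsep : sep ∉ U) {l : List ℕ}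
    (hb : ∀ x ∈ l, x + k ≤ U.length) {V : List β} (hV : sep :: V <:+ glueWindows sep U k l) :
    k ≤ V.length ∧ sep ∉ window V k 0 := by
  have hfree (i : ℕ) : sep ∉ window U k i := fun h => hsep (mem_of_mem_window h)
  fun_induction glueWindows sep U k l with
  | case1 => simp at hV
  | case2 i => exact absurd (hV.mem List.mem_cons_self) (hfree i)
  | case3 i t ih =>
    exact ih (fun x hx => hb x (List.mem_cons_of_mem _ hx))
      (suffix_of_cons_suffix_append (fun h => hsep (mem_of_mem_window h)) hV)
  | case4 i j t hij ih =>
    have hb' : ∀ x ∈ j :: t, x + k ≤ U.length := fun x hx => hb x (List.mem_cons_of_mem _ hx)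
    rcases List.suffix_cons_iff.mp (suffix_of_cons_suffix_append (hfree i) hV) with h | h
    · obtain rfl := (List.cons_eq_cons.mp h).2
      have hpre := window_prefix_glueWindows (sep := sep) hb'
      have hlen := length_window (hb' j List.mem_cons_self)
      have hwin := window_eq_of_prefix hpre
      rw [hlen] at hwin
      exact ⟨hlen.symm.trans_le hpre.length_le, hwin ▸ hfree j⟩
    · exact ih hb' h

theorem head?_glueWindows_ne (hk : 0 < k) (hsep : sep ∉ U) {l : List ℕ}
    (hb : ∀ x ∈ l, x + k ≤ U.length) : (glueWindows sep U k l).head? ≠ some sep := by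
  cases l with
  | nil => simp [glueWindows]
  | cons i t =>
    have hpre := window_prefix_glueWindows (sep := sep) hb
    have hne : window U k i ≠ [] := by
      rw [← List.length_pos_iff, length_window (hb i List.mem_cons_self)]
      exact hk
    obtain ⟨r, hr⟩ := hpre
    rw [← hr, List.head?_append_of_ne_nil _ hne]
    intro h
    exact hsep (mem_of_mem_window (List.mem_of_mem_head? h))

theorem length_glueWindows_le (hk : 0 < k) {l : List ℕ} (hl : l.Pairwise (· < ·)) {a b : ℕ}
    (hab : ∀ x ∈ l, a ≤ x ∧ x < b) :
    (glueWindows sep U k l).length ≤ spanBound k (b - a) := by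
  fun_induction glueWindows sep U k l generalizing a with
  | case1 => simp
  | case2 i =>
    have := hab i List.mem_cons_self
    calc (window U k i).length ≤ spanBound k 1 :=
          (spanBound_one k).symm ▸ List.length_take_le _ _
      _ ≤ spanBound k (b - a) := spanBound_mono hk (by omega)
  | case3 i t ih =>
    have hrest := (List.pairwise_cons.mp hl).2
    have hi := hab i List.mem_cons_self
    have hj := hab (i + 1) (by simp)
    have := ih hrest fun x hx => ⟨head_le_of_pairwise_lt hrest hx, (hab x (by simp [hx])).2⟩
    calc (window U 1 i ++ glueWindows sep U k ((i + 1) :: t)).length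
        ≤ spanBound k (b - (i + 1)) + 1 := by
          have : (window U 1 i).length ≤ 1 := List.length_take_le _ _
          rw [List.length_append]
          omega
      _ ≤ spanBound k (b - (i + 1) + 1) := spanBound_succ hk _
      _ ≤ spanBound k (b - a) := spanBound_mono hk (by omega)
  | case4 i j t hij ih =>
    obtain ⟨hij', hrest⟩ := List.pairwise_cons.mp hl
    have hi := hab i List.mem_cons_self
    have hj := hab j (by simp)
    have := hij' j List.mem_cons_self
    have := ih hrest fun x hx => ⟨head_le_of_pairwise_lt hrest hx, (hab x (by simp [hx])).2⟩
    calc (window U k i ++ sep :: glueWindows sep U k (j :: t)).length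
        ≤ spanBound k (b - j) + (k + 1) := by
          have : (window U k i).length ≤ k := List.length_take_le _ _
          rw [List.length_append, List.length_cons]
          omega
      _ = spanBound k (b - j + 2) := (spanBound_add_two k _).symm
      _ ≤ spanBound k (b - a) := spanBound_mono hk (by omega)

theorem count_glueWindows_le [BEq β] [LawfulBEq β] (hsep : sep ∉ U) {l : List ℕ}
    (hl : l.Pairwise (· < ·)) {a b : ℕ} (hab : ∀ x ∈ l, a ≤ x ∧ x < b) :
    (glueWindows sep U k l).count sep ≤ (b - a) / 2 := by
  have hfree (n i : ℕ) : (window U n i).count sep = 0 :=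
    List.count_eq_zero.mpr fun h => hsep (mem_of_mem_window h)
  fun_induction glueWindows sep U k l generalizing a with
  | case1 => simp
  | case2 i => simp [hfree]
  | case3 i t ih =>
    have hrest := (List.pairwise_cons.mp hl).2
    have hi := hab i List.mem_cons_self
    have := ih hrest fun x hx => ⟨head_le_of_pairwise_lt hrest hx, (hab x (by simp [hx])).2⟩
    rw [List.count_append, hfree]
    omega
  | case4 i j t hij ih =>
    obtain ⟨hij', hrest⟩ := List.pairwise_cons.mp hl
    have hi := hab i List.mem_cons_self
    have hj := hab j (by simp)
    have := hij' j List.mem_cons_self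
    have := ih hrest fun x hx => ⟨head_le_of_pairwise_lt hrest hx, (hab x (by simp [hx])).2⟩
    rw [List.count_append, List.count_cons_self, hfree]
    omega

end Glue

section Sanitization

variable {α : Type*} [DecidableEq α]

def WindowSequenceEq (W : List α) (S : Finset ℕ) (k : ℕ) (X : List (Option α)) : Prop :=
  (sepFreeStarts none X k).map (window X k) =
    ((IUset W S k (W.map some)).sort (· ≤ ·)).map (window (W.map some) k)

variable {W : List α} {S : Finset ℕ} {k : ℕ} {X : List (Option α)}

theorem mem_IUset_map_some {i : ℕ} :
    i ∈ IUset W S k (W.map some) ↔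
      i + k ≤ W.length ∧ ¬∃ j ∈ S, window W k i = window W k j := by
  have hw : ((W.map some).drop i).take k = (window W k i).map some := window_map _ _
  simp only [IUset, Finset.mem_filter, Finset.mem_range, List.length_map, hw]
  simp only [List.mem_map, ne_eq, forall_exists_index, and_imp, forall_apply_eq_imp_iff₂,
    reduceCtorEq, not_false_eq_true, implies_true, true_and, reduceOption_map_some]
  exact and_congr_left' (by omega)

theorem exists_mem_IUset_window_eq (hX : WindowSequenceEq W S k X) {p : ℕ}
    (hp : p ∈ sepFreeStarts none X k) :
    ∃ q ∈ IUset W S k (W.map some), window X k p = window (W.map some) k q := by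
  have := List.mem_map_of_mem (f := window X k) hp
  rw [hX] at this
  obtain ⟨q, hq, e⟩ := List.mem_map.mp this
  exact ⟨q, (Finset.mem_sort _).mp hq, e.symm⟩

theorem IUset_eq_toFinset_sepFreeStarts (hX : WindowSequenceEq W S k X) :
    IUset W S k X = (sepFreeStarts none X k).toFinset := by
  ext p
  simp only [IUset, Finset.mem_filter, Finset.mem_range, List.mem_toFinset, mem_sepFreeStarts,
    List.forall_mem_ne']
  constructor
  · rintro ⟨hp, hfree, -⟩
    exact ⟨by omega, hfree⟩
  · rintro ⟨hp, hfree⟩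
    obtain ⟨q, hq, e⟩ := exists_mem_IUset_window_eq hX (mem_sepFreeStarts.mpr ⟨hp, hfree⟩)
    simp only [IUset, Finset.mem_filter] at hq
    refine ⟨by omega, hfree, ?_⟩
    rw [show (X.drop p).take k = window X k p from rfl, e]
    exact hq.2.2

theorem propP1_of_windowSequenceEq (hX : WindowSequenceEq W S k X) : PropP1 W S k X := by
  have hsorted : (sepFreeStarts none X k).Pairwise (· < ·) := pairwise_sepFreeStarts
  have hnodup := hsorted.nodup
  have hsort : (sepFreeStarts none X k).toFinset.sort (· ≤ ·) = sepFreeStarts none X k :=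
    (List.toFinset_sort _ hnodup).mpr (hsorted.imp le_of_lt)
  have hlen := congrArg List.length hX
  simp only [List.length_map, Finset.length_sort] at hlen
  rw [PropP1, IUset_eq_toFinset_sepFreeStarts hX, hsort,
    List.toFinset_card_of_nodup hnodup]
  refine ⟨hlen.symm, fun j hj => ?_⟩
  have hj' : j < ((IUset W S k (W.map some)).sort (· ≤ ·)).length := by simpa using hj
  have := congrArg (·[j]?) hX
  simp only [List.getElem?_map, List.getElem?_eq_getElem (hlen ▸ hj),
    List.getElem?_eq_getElem hj', Option.map_some, Option.some_inj] at this
  rwa [List.getD_eq_getElem _ _ (hlen ▸ hj), List.getD_eq_getElem _ _ hj']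

theorem propP2_of_windowSequenceEq (hX : WindowSequenceEq W S k X) : PropP2 W S k X := by
  intro P hP hns
  set L := (IUset W S k (W.map some)).sort (· ≤ ·)
  have hwin (q : ℕ) : window (W.map some) k q = P.map some ↔ window W k q = P := by
    rw [window_map, (List.map_injective_iff.mpr (Option.some_injective α)).eq_iff]
  have hW : strFreq W P = ((IUset W S k (W.map some)).filter (window W k · = P)).card := by
    rw [strFreq, hP]
    congr 1
    ext q
    simp only [Finset.mem_filter, Finset.mem_range, mem_IUset_map_some]
    constructor
    · rintro ⟨hq, e⟩
      exact ⟨⟨by omega, fun ⟨j, hj, e'⟩ => hns j hj (e.symm.trans e')⟩, e⟩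
    · rintro ⟨⟨hq, -⟩, e⟩
      exact ⟨by omega, e⟩
  calc strFreq X (P.map some)
      = (sepFreeStarts none X k).countP (window X k · = P.map some) :=
        strFreq_eq_countP_sepFreeStarts (by simp [hP]) (by simp)
    _ = ((sepFreeStarts none X k).map (window X k)).countP (· = P.map some) := by
        rw [List.countP_map]; rfl
    _ = L.countP (window W k · = P) := by
        rw [hX, List.countP_map]
        exact List.countP_congr fun q _ => by simp [hwin]
    _ = strFreq W P := by
        rw [hW, ← (Finset.sort_nodup _ _).card_eq_countP, Finset.sort_toFinset]

theorem propC1_of_windowSequenceEq (hX : WindowSequenceEq W S k X)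
    (hS : ∀ j ∈ S, j + k ≤ W.length) : PropC1 W S k X := by
  rintro j hj ⟨s, t, hst⟩
  change s ++ (window W k j).map some ++ t = X at hst
  have hlen : (window W k j).length = k := length_window (hS j hj)
  have hs : window X k s.length = (window W k j).map some := by
    rw [← hst, window, List.append_assoc, List.drop_left,
      List.take_left' (by rw [List.length_map, hlen])]
  have hsX : s.length + k ≤ X.length := by
    rw [← hst]
    simp [hlen]
  obtain ⟨q, hq, e⟩ := exists_mem_IUset_window_eq hX <| mem_sepFreeStarts.mpr
    ⟨hsX, by simp [hs]⟩
  refine (mem_IUset_map_some.mp hq).2 ⟨j, hj, ?_⟩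
  rw [hs, window_map] at e
  exact (List.map_injective_iff.mpr (Option.some_injective α) e).symm

end Sanitization

end StringSanitization

open StringSanitization in
theorem stmt5_general {α : Type*} [DecidableEq α] (W : List α) (n k : ℕ)
    (hn : W.length = n) (hk0 : 0 < k) (hkn : k < n)
    (S : Finset ℕ) (hSrange : ∀ i ∈ S, i ≤ n - k) :
    ∃ X : List (Option α),
      PropC1 W S k X ∧ PropP1 W S k X ∧ PropP2 W S k X ∧
      -- (i)  ⌈(n−k+1)/2⌉ = (n−k+2)/2 and ⌊(n−k+1)/2⌋ = (n−k+1)/2 in ℕ-division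
      X.length ≤ ((n - k + 2) / 2) * k + (n - k + 1) / 2 ∧
      -- (ii)
      X.count none ≤ (n - k + 1) / 2 ∧
      -- (iii)
      (∀ i, X[i]? = some none →
        i + k + 1 ≤ X.length ∧ ∀ j, i < j → j ≤ i + k → X[j]? ≠ some none) ∧
      (∀ i j, X[i]? = some none → X[j]? = some none → i < j → i + k + 1 ≤ j) ∧
      X.getLast? ≠ some none ∧
      -- (iv)
      X.head? ≠ some none := by
  set L := (IUset W S k (W.map some)).sort (· ≤ ·)
  have hL : ∀ q ∈ L, 0 ≤ q ∧ q < n - k + 1 := fun q hq => by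
    have := (mem_IUset_map_some.mp ((Finset.mem_sort _).mp hq)).1
    omega
  have hb : ∀ q ∈ L, q + k ≤ (W.map some).length := fun q hq => by
    have := hL q hq
    simp only [List.length_map]
    omega
  have hsep : none ∉ W.map some := by simp
  have hpair : L.Pairwise (· < ·) := (Finset.sortedLT_sort _).pairwise
  set X := glueWindows none (W.map some) k L
  have hX : WindowSequenceEq W S k X := map_window_sepFreeStarts_glueWindows hk0 hsep hb
  have hspacing (i : ℕ) (hi : X[i]? = some none) :
      i + k + 1 ≤ X.length ∧ ∀ j, i < j → j ≤ i + k → X[j]? ≠ some none :=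
    getElem?_eq_sep_spacing (fun _ hV => sep_suffix_glueWindows hsep hb hV) hi
  refine ⟨X, propC1_of_windowSequenceEq hX fun j hj => ?_, propP1_of_windowSequenceEq hX,
    propP2_of_windowSequenceEq hX, length_glueWindows_le hk0 hpair hL,
    count_glueWindows_le hsep hpair hL, hspacing, fun i j hi hj hij => ?_, fun h => ?_,
    head?_glueWindows_ne hk0 hsep hb⟩
  · have := hSrange j hj
    omega
  · by_contra
    exact (hspacing i hi).2 j hij (by omega) hj
  · rw [List.getLast?_eq_getElem?] at h
    have := (hspacing _ h).1
    omega

/-- there exists a string `X` over `Σ ∪ {#}` satisfying C1, P1 and P2 with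
(i) `|X| ≤ ⌈(n−k+1)/2⌉·k + ⌊(n−k+1)/2⌋`;
(ii) `#` occurs at most `⌊(n−k+1)/2⌋` times in `X`;
(iii) every occurrence of `#` is followed by at least `k` letters (of `Σ`), so in
particular any two occurrences of `#` are at least `k+1` positions apart and `X` does not
end with `#`; and
(iv) `X` does not begin with `#`. -/
theorem stmt5 {α : Type*} [Fintype α] [DecidableEq α] (W : List α) (n k : ℕ)
    (hn : W.length = n) (hk0 : 0 < k) (hkn : k < n)
    (S : Finset ℕ) (hSrange : ∀ i ∈ S, i ≤ n - k)
    (hSclosed : ∀ i ∈ S, ∀ j, j ≤ n - k →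
      (W.drop j).take k = (W.drop i).take k → j ∈ S) :
    ∃ X : List (Option α),
      PropC1 W S k X ∧ PropP1 W S k X ∧ PropP2 W S k X ∧
      -- (i)  ⌈(n−k+1)/2⌉ = (n−k+2)/2 and ⌊(n−k+1)/2⌋ = (n−k+1)/2 in ℕ-division
      X.length ≤ ((n - k + 2) / 2) * k + (n - k + 1) / 2 ∧
      -- (ii)
      X.count none ≤ (n - k + 1) / 2 ∧
      -- (iii)
      (∀ i, X[i]? = some none →
        i + k + 1 ≤ X.length ∧ ∀ j, i < j → j ≤ i + k → X[j]? ≠ some none) ∧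
      (∀ i j, X[i]? = some none → X[j]? = some none → i < j → i + k + 1 ≤ j) ∧
      X.getLast? ≠ some none ∧
      -- (iv)
      X.head? ≠ some none :=
  stmt5_general W n k hn hk0 hkn S hSrange
end

section
/- Tightness of the length upper bound for PFS: suppose k ≥ 2, every length-(k−1) string over Σ occurs exactly once as a substring of W (W is an order-(k−1) de Bruijn sequence over Σ), n−k is even, and S = {1,3,5,…,n−k−1}. Then every string Y over Σ∪{#} satisfying properties C1, Π1 and P2 has length |Y| ≥ ⌈(n−k+1)/2⌉·k + ⌊(n−k+1)/2⌋. -/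
open Finset

theorem List.map_some_reduceOption {β : Type*} {l : List (Option β)} (h : ∀ x ∈ l, x ≠ none) :
    l.reduceOption.map some = l := by
  induction l with
  | nil => rfl
  | cons a l ih => cases a <;> simp_all

theorem List.forall_mem_take_drop_iff {β : Type*} {Y : List β} {i c : ℕ} {Q : β → Prop} :
    (∀ x ∈ (Y.drop i).take c, Q x) ↔
      ∀ t, i ≤ t → t < i + c → ∀ h : t < Y.length, Q (Y[t]'h) := by
  constructor
  · intro H t hit hitc ht
    apply H
    rw [List.mem_iff_getElem]
    refine ⟨t - i, by simp only [List.length_take, List.length_drop]; omega, ?_⟩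
    rw [List.getElem_take, List.getElem_drop]
    congr 1
    omega
  · intro H x hx
    obtain ⟨s, hs, rfl⟩ := List.mem_iff_getElem.mp hx
    simp only [List.length_take, List.length_drop, lt_min_iff] at hs
    rw [List.getElem_take, List.getElem_drop]
    exact H (i + s) (by omega) (by omega) (by omega)

theorem List.take_drop_succ_eq_of_take_drop_eq {β : Type*} {L M : List β} {e p k : ℕ}
    (h : (L.drop e).take k = (M.drop p).take k) :
    (L.drop (e + 1)).take (k - 1) = (M.drop (p + 1)).take (k - 1) := by
  simpa [List.drop_take, List.drop_drop, add_comm] using congrArg (List.drop 1) h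

theorem List.take_eq_take_of_le {β : Type*} {l₁ l₂ : List β} {m n : ℕ}
    (h : l₁.take n = l₂.take n) (hmn : m ≤ n) : l₁.take m = l₂.take m := by
  simpa [List.take_take, min_eq_left hmn] using congrArg (List.take m) h

theorem Finset.card_sub_one_mul_le_max' {d : ℕ} (s : Finset ℕ)
    (hgap : ∀ p ∈ s, ∀ q ∈ s, p < q → p + d ≤ q) (hs : s.Nonempty) :
    (s.card - 1) * d ≤ s.max' hs := by
  induction s using Finset.induction_on_max with
  | empty => exact absurd hs (by simp)
  | insert a s ha ih =>
    have hmax : (insert a s).max' hs = a := by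
      refine le_antisymm (max'_le _ _ _ fun x hx => ?_) (le_max' _ _ (mem_insert_self a s))
      rcases mem_insert.mp hx with rfl | hx
      · exact le_rfl
      · exact (ha x hx).le
    rw [hmax, card_insert_of_notMem fun h => lt_irrefl a (ha a h), Nat.add_sub_cancel]
    rcases s.eq_empty_or_nonempty with rfl | hs'
    · simp
    · have hprev := ih (fun p hp q hq => hgap p (mem_insert_of_mem hp) q (mem_insert_of_mem hq)) hs'
      have hlast := hgap _ (mem_insert_of_mem (max'_mem s hs')) a (mem_insert_self a s)
        (ha _ (max'_mem s hs'))
      obtain ⟨c, hc⟩ : ∃ c, s.card = c + 1 := ⟨_, (Nat.succ_pred_eq_of_pos hs'.card_pos).symm⟩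
      rw [hc, Nat.add_sub_cancel] at hprev
      rw [hc, add_mul, one_mul]
      omega

section strFreq

variable {β : Type*} [DecidableEq β] {T P : List β}

theorem strFreq_pos_iff :
    0 < strFreq T P ↔ ∃ i, i + P.length ≤ T.length ∧ (T.drop i).take P.length = P := by
  simp only [strFreq, card_pos, Finset.Nonempty, mem_filter, mem_range]
  exact exists_congr fun i => and_congr_left' (by omega)

theorem eq_of_take_drop_eq_of_strFreq_le_one {m p q : ℕ} (hm : 0 < m)
    (huniq : ∀ P : List β, P.length = m → strFreq T P ≤ 1) (hp : p + m ≤ T.length)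
    (h : (T.drop p).take m = (T.drop q).take m) : p = q := by
  have hlen : ((T.drop p).take m).length = m := by
    simp only [List.length_take, List.length_drop]
    omega
  have hq : q + m ≤ T.length := by
    have := congrArg List.length h
    simp only [List.length_take, List.length_drop] at this
    omega
  exact Finset.card_le_one.mp (huniq _ hlen)
    p (mem_filter.mpr ⟨mem_range.mpr (by omega), by rw [hlen]⟩)
    q (mem_filter.mpr ⟨mem_range.mpr (by omega), by rw [hlen, h]⟩)

end strFreq

theorem isPChain_singleton {α : Type*} {U : List (Option α)} {F : Finset ℕ} {k i : ℕ}
    (hi : i ∈ F) : IsPChain U k F {i} :=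
  ⟨singleton_subset_iff.mpr hi, fun x hx => Or.inl fun y hy => by
    rw [mem_singleton] at hx hy
    rw [hx, hy]⟩

section PFS

variable {α : Type*} [DecidableEq α] {W : List α} {S : Finset ℕ} {k : ℕ} {Y : List (Option α)}

theorem mem_IUset_iff {p : ℕ} :
    p ∈ IUset W S k Y ↔ p + k ≤ Y.length ∧ (∀ x ∈ (Y.drop p).take k, x ≠ none) ∧
      ¬ ∃ j ∈ S, ((Y.drop p).take k).reduceOption = (W.drop j).take k := by
  simp only [IUset, mem_filter, mem_range]
  exact and_congr_left' (by omega)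

theorem mem_IUset_map_some {i : ℕ} (hi : i + k ≤ W.length)
    (hns : ∀ j ∈ S, (W.drop i).take k ≠ (W.drop j).take k) :
    i ∈ IUset W S k (W.map some) := by
  have hwin : ((W.map some).drop i).take k = ((W.drop i).take k).map some := by
    rw [List.map_take, List.map_drop]
  rw [mem_IUset_iff, hwin]
  refine ⟨by simpa using hi, fun x hx => ?_, ?_⟩
  · obtain ⟨a, -, rfl⟩ := List.mem_map.mp hx
    exact Option.some_ne_none a
  rintro ⟨j, hj, heq⟩
  exact hns j hj (by simpa [List.reduceOption] using heq)

/-- `f` maps the singleton p-chains of `I_W` injectively to singleton p-chains of `I_Y`. -/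
theorem PropPi1.card_IUset_le (h : PropPi1 W S k Y) :
    (IUset W S k (W.map some)).card ≤ (IUset W S k Y).card := by
  obtain ⟨f, hf, hequiv⟩ := h
  let g : IUset W S k (W.map some) → Finset ℕ := fun i => (f ⟨{i.1}, isPChain_singleton i.2⟩).1
  have hmaps :
      Set.MapsTo g (IUset W S k (W.map some)).attach (powersetCard 1 (IUset W S k Y)) :=
    fun i _ => mem_powersetCard.mpr
      ⟨(f _).2.1, (hequiv ⟨{i.1}, isPChain_singleton i.2⟩).1.symm.trans (card_singleton i.1)⟩
  have hinj : Set.InjOn g (IUset W S k (W.map some)).attach := fun i _ j _ hij => by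
    have := congrArg Subtype.val (hf (Subtype.ext hij))
    exact Subtype.ext (singleton_injective this)
  calc (IUset W S k (W.map some)).card = (IUset W S k (W.map some)).attach.card :=
        card_attach.symm
    _ ≤ (powersetCard 1 (IUset W S k Y)).card := card_le_card_of_injOn g hmaps hinj
    _ = (IUset W S k Y).card := by rw [card_powersetCard, Nat.choose_one_right]

theorem PropC1.succ_mem_IUset (hC1 : PropC1 W S k Y) {p q : ℕ} (hp : p ∈ IUset W S k Y)
    (hq : q ∈ IUset W S k Y) (hpq : p < q) (hqp : q ≤ p + k) : p + 1 ∈ IUset W S k Y := by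
  rw [mem_IUset_iff] at hp hq ⊢
  obtain ⟨hpY, hpSome, -⟩ := hp
  obtain ⟨hqY, hqSome, -⟩ := hq
  have hSome : ∀ x ∈ (Y.drop (p + 1)).take k, x ≠ none := by
    rw [List.forall_mem_take_drop_iff] at hpSome hqSome ⊢
    intro s h1 h2 hs
    by_cases hsp : s < p + k
    · exact hpSome s (by omega) hsp hs
    · exact hqSome s (by omega) (by omega) hs
  refine ⟨by omega, hSome, ?_⟩
  rintro ⟨j, hj, heq⟩
  apply hC1 j hj
  rw [← heq, List.map_some_reduceOption hSome]
  exact (List.take_prefix _ _).isInfix.trans (List.drop_suffix _ _).isInfix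

theorem PropP2.exists_occurrence (hP2 : PropP2 W S k Y) {p : ℕ} (hp : p ∈ IUset W S k Y) :
    ∃ e ∉ S, e + k ≤ W.length ∧ ((W.map some).drop e).take k = (Y.drop p).take k := by
  rw [mem_IUset_iff] at hp
  obtain ⟨hpY, hpSome, hns⟩ := hp
  set P := ((Y.drop p).take k).reduceOption
  have hPY : P.map some = (Y.drop p).take k := List.map_some_reduceOption hpSome
  have hPlen : P.length = k := by
    have := congrArg List.length hPY
    simp only [List.length_map, List.length_take, List.length_drop] at this
    omega
  have hPns : ∀ j ∈ S, P ≠ (W.drop j).take k := fun j hj h => hns ⟨j, hj, h⟩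
  have hocc : 0 < strFreq W P := by
    rw [← hP2 P hPlen hPns, strFreq_pos_iff]
    exact ⟨p, by simpa [hPlen] using hpY, by rw [List.length_map, hPlen, hPY]⟩
  obtain ⟨e, he, heP⟩ := strFreq_pos_iff.mp hocc
  rw [hPlen] at he heP
  exact ⟨e, fun heS => hPns e heS heP.symm, he, by rw [← List.map_drop, ← List.map_take, heP, hPY]⟩

theorem PropP2.exists_succ_notMem (hP2 : PropP2 W S k Y) (hk : 1 < k)
    (huniq : ∀ P : List α, P.length = k - 1 → strFreq W P ≤ 1) {p : ℕ}
    (hp : p ∈ IUset W S k Y) (hp1 : p + 1 ∈ IUset W S k Y) :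
    ∃ e ∉ S, e + 1 ∉ S ∧ e + 1 + k ≤ W.length := by
  obtain ⟨e, heS, he, heq⟩ := hP2.exists_occurrence hp
  obtain ⟨e', he'S, he', heq'⟩ := hP2.exists_occurrence hp1
  have hoverlap :
      ((W.drop (e + 1)).take (k - 1)).map some = ((W.drop e').take (k - 1)).map some := by
    rw [List.map_take, List.map_drop, List.map_take, List.map_drop,
      List.take_drop_succ_eq_of_take_drop_eq heq,
      List.take_eq_take_of_le heq'.symm (Nat.sub_le k 1)]
  have hee' : e + 1 = e' := eq_of_take_drop_eq_of_strFreq_le_one (by omega) huniq (by omega)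
    (List.map_injective_iff.mpr (Option.some_injective α) hoverlap)
  exact ⟨e, heS, hee' ▸ he'S, hee' ▸ he'⟩

end PFS

theorem stmt8_general {α : Type*} [DecidableEq α] (W : List α) (n k : ℕ)
    (hn : W.length = n) (hk : 2 ≤ k) (hkn : k < n)
    (hdeBruijn : ∀ P : List α, P.length = k - 1 → strFreq W P = 1)
    (heven : Even (n - k))
    (S : Finset ℕ) (hS : S = (Finset.range (n - k)).filter (fun i => i % 2 = 1)) :
    ∀ Y : List (Option α), PropC1 W S k Y → PropPi1 W S k Y → PropP2 W S k Y →
      ((n - k + 2) / 2) * k + (n - k + 1) / 2 ≤ Y.length := by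
  intro Y hC1 hPi1 hP2
  obtain ⟨t, ht⟩ := heven
  have hSmem : ∀ j, j ∈ S ↔ j < n - k ∧ j % 2 = 1 := by simp [hS]
  have huniq : ∀ P : List α, P.length = k - 1 → strFreq W P ≤ 1 := fun P hP => (hdeBruijn P hP).le
  have hevenW : (range (t + 1)).image (2 * ·) ⊆ IUset W S k (W.map some) := by
    simp only [subset_iff, mem_image, mem_range]
    rintro _ ⟨i, hi, rfl⟩
    refine mem_IUset_map_some (by omega) fun j hj heq => ?_
    have := eq_of_take_drop_eq_of_strFreq_le_one (by omega) huniq (by omega)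
      (List.take_eq_take_of_le heq (Nat.sub_le k 1))
    rw [hSmem] at hj
    omega
  have hcard : t + 1 ≤ (IUset W S k Y).card := by
    have := card_le_card hevenW
    rw [card_image_of_injective _ (mul_right_injective₀ two_ne_zero), card_range] at this
    exact this.trans hPi1.card_IUset_le
  have hgap : ∀ p ∈ IUset W S k Y, ∀ q ∈ IUset W S k Y, p < q → p + (k + 1) ≤ q := by
    intro p hp q hq hpq
    by_contra! hclose
    obtain ⟨e, he, he1, hlen⟩ :=
      hP2.exists_succ_notMem (by omega) huniq hp (hC1.succ_mem_IUset hp hq hpq (by omega))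
    rw [hSmem] at he he1
    omega
  have hne : (IUset W S k Y).Nonempty := card_pos.mp (by omega)
  have hlast := card_sub_one_mul_le_max' _ hgap hne
  have hfits := (mem_IUset_iff.mp (max'_mem _ hne)).1
  have hlow : t * (k + 1) ≤ ((IUset W S k Y).card - 1) * (k + 1) :=
    Nat.mul_le_mul_right _ (by omega)
  calc ((n - k + 2) / 2) * k + (n - k + 1) / 2 = t * (k + 1) + k := by
        rw [show (n - k + 2) / 2 = t + 1 by omega, show (n - k + 1) / 2 = t by omega]
        ring
    _ ≤ Y.length := by omega

/-- tightness of the PFS length upper bound: if `k ≥ 2`, every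
length-`(k−1)` string over `Σ` occurs exactly once as a substring of `W` (an
order-`(k−1)` de Bruijn sequence), `n − k` is even, and `S = {1,3,5,…,n−k−1}`, then
every string `Y` over `Σ ∪ {#}` satisfying C1, Π1 and P2 has
`|Y| ≥ ⌈(n−k+1)/2⌉·k + ⌊(n−k+1)/2⌋`. -/
theorem stmt8 {α : Type*} [Fintype α] [DecidableEq α] (W : List α) (n k : ℕ)
    (hn : W.length = n) (hk : 2 ≤ k) (hkn : k < n)
    (hdeBruijn : ∀ P : List α, P.length = k - 1 → strFreq W P = 1)
    (heven : Even (n - k))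
    (S : Finset ℕ) (hS : S = (Finset.range (n - k)).filter (fun i => i % 2 = 1)) :
    ∀ Y : List (Option α), PropC1 W S k Y → PropPi1 W S k Y → PropP2 W S k Y →
      ((n - k + 2) / 2) * k + (n - k + 1) / 2 ≤ Y.length :=
  stmt8_general W n k hn hk hkn hdeBruijn heven S hS
end

section
/- Objective-value correspondence in the MCK-to-MCSR reduction: in the setting of the reduction (classes C_1,…,C_δ with distinct letters α_{ij}, string Y with δ occurrences of #, replacement string Z_g for a choice function g), fix real costs c_{ij} ≥ 0, real weights w_{ij}, a real b, and set τ = 2, θ = δ − b, Ghost(μ(i), α_{ij}) = c_{ij} and Sub(μ(i), α_{ij}) = 1 − w_{ij}, where μ(i) is the position of the i-th occurrence of # in Y. Then: (a) the set of positions p with Y[p] = #, Freq_Y(Z_g[p]) < τ and Freq_{Z_g}(Z_g[p]) ≥ τ is exactly the set {μ(1),…,μ(δ)} of all replaced positions, so the total ghost cost Σ over such p of Ghost(p, Z_g[p]) equals Σ_{i=1}^{δ} c_{i,g(i)}; (b) the total substitution weight Σ_{p: Y[p]=#} Sub(p, Z_g[p]) equals δ − Σ_{i=1}^{δ} w_{i,g(i)};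 consequently Σ_{p: Y[p]=#} Sub(p, Z_g[p]) ≤ θ if and only if Σ_{i=1}^{δ} w_{i,g(i)} ≥ b. -/
/-!
Both `Y` and `Z_g` are concatenations of `δ` blocks, the `i`-th being the letters of `C_i`
followed by a terminal symbol (`#` in `Y`, `α_{i,g(i)}` in `Z_g`). Cutting `Y` into these blocks
shows that its `#`s sit exactly at the block ends `μ(i)`. Since the letters are pairwise
distinct, `α_{i,g(i)}` occurs once in `Y` and twice in `Z_g`, so every replaced position passes
the frequency test; both sums are then reindexed over `i` through the injective `μ`.
-/

/-- The string `Y = α_{11}…α_{1n_1} # α_{21}…α_{2n_2} # … # α_{δ1}…α_{δn_δ} #` of the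
MCK-to-MCSR reduction, over `Σ ∪ {#}` modelled as `Option β` (`none` is `#`). -/
def Ystr {β : Type*} {δ : ℕ} {n : Fin δ → ℕ} (a : (i : Fin δ) → Fin (n i) → β) :
    List (Option β) :=
  (List.ofFn (fun i => (List.ofFn fun j => some (a i j)) ++ [none])).flatten

/-- The string `Z_g` obtained from `Y` by replacing, for each `i`, the `i`-th occurrence
of `#` (the one terminating the `i`-th block) with the letter `α_{i,g(i)}`. -/
def Zstr {β : Type*} {δ : ℕ} {n : Fin δ → ℕ} (a : (i : Fin δ) → Fin (n i) → β)
    (g : (i : Fin δ) → Fin (n i)) : List (Option β) :=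
  (List.ofFn (fun i => (List.ofFn fun j => some (a i j)) ++ [some (a i (g i))])).flatten

/-- `μ(i)`: the position of the `i`-th occurrence of `#` in `Y`. -/
def muPos {δ : ℕ} (n : Fin δ → ℕ) (i : Fin δ) : ℕ :=
  (∑ i' ∈ Finset.Iio i, (n i' + 1)) + n i

/-- The set of positions of `#` in `Y`. -/
def hashPos {β : Type*} [DecidableEq β] {δ : ℕ} {n : Fin δ → ℕ}
    (a : (i : Fin δ) → Fin (n i) → β) : Finset ℕ :=
  (Finset.range (Ystr a).length).filter (fun p => (Ystr a)[p]? = some none)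

namespace List

variable {α : Type*}

theorem getElem?_flatten_length_take_add (L : List (List α)) {k : ℕ} (hk : k < L.length)
    {j : ℕ} (hj : j < L[k].length) :
    L.flatten[(L.take k).flatten.length + j]? = L[k][j]? := by
  have hsplit : L.flatten = (L.take k).flatten ++ (L[k] ++ (L.drop (k + 1)).flatten) := by
    rw [← flatten_cons, ← drop_eq_getElem_cons hk, ← flatten_append, take_append_drop]
  rw [hsplit, getElem?_append_right (Nat.le_add_right _ _), Nat.add_sub_cancel_left,
    getElem?_append_left hj]

theorem exists_eq_length_take_add_of_lt_length_flatten (L : List (List α)) {p : ℕ}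
    (hp : p < L.flatten.length) :
    ∃ k, ∃ hk : k < L.length, ∃ j < L[k].length, p = (L.take k).flatten.length + j := by
  induction L generalizing p with
  | nil => simp at hp
  | cons l L ih =>
    by_cases h : p < l.length
    · exact ⟨0, by simp, p, h, by simp⟩
    · rw [flatten_cons, length_append] at hp
      obtain ⟨k, hk, j, hj, hp'⟩ := ih (p := p - l.length) (by omega)
      refine ⟨k + 1, by simpa using hk, j, hj, ?_⟩
      rw [take_succ_cons, flatten_cons, length_append]
      omega

theorem length_flatten_take_ofFn {δ : ℕ} (B : Fin δ → List α) (k : Fin δ) :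
    ((ofFn B).take k).flatten.length = ∑ i ∈ Finset.Iio k, (B i).length := by
  rw [length_flatten, map_take, map_ofFn, sum_take_ofFn]
  congr 1
  ext
  simp

theorem getElem?_flatten_ofFn_sum_Iio_add {δ : ℕ} (B : Fin δ → List α) (i : Fin δ) {j : ℕ}
    (hj : j < (B i).length) :
    (ofFn B).flatten[(∑ i' ∈ Finset.Iio i, (B i').length) + j]? = (B i)[j]? := by
  rw [← length_flatten_take_ofFn]
  simpa using getElem?_flatten_length_take_add (ofFn B) (k := i) (by simp) (by simpa using hj)

theorem exists_eq_sum_Iio_add_of_lt_length_flatten_ofFn {δ : ℕ} (B : Fin δ → List α) {p : ℕ}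
    (hp : p < (ofFn B).flatten.length) :
    ∃ i : Fin δ, ∃ j < (B i).length, p = (∑ i' ∈ Finset.Iio i, (B i').length) + j := by
  obtain ⟨k, hk, j, hj, rfl⟩ := exists_eq_length_take_add_of_lt_length_flatten _ hp
  rw [length_ofFn] at hk
  refine ⟨⟨k, hk⟩, j, by simpa using hj, ?_⟩
  rw [← length_flatten_take_ofFn]

end List

section Reduction

open Finset

variable {β : Type*} {δ : ℕ} {n : Fin δ → ℕ} (a : (i : Fin δ) → Fin (n i) → β)

def blockStr (t : Fin δ → Option β) : List (Option β) :=
  (List.ofFn fun i => (List.ofFn fun j => some (a i j)) ++ [t i]).flatten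

theorem Ystr_eq_blockStr : Ystr a = blockStr a fun _ => none := rfl

theorem Zstr_eq_blockStr (g : (i : Fin δ) → Fin (n i)) :
    Zstr a g = blockStr a fun i => some (a i (g i)) := rfl

theorem getElem?_blockStr_sum_Iio_add (t : Fin δ → Option β) (i : Fin δ) {j : ℕ}
    (hj : j < n i + 1) :
    (blockStr a t)[(∑ i' ∈ Iio i, (n i' + 1)) + j]? =
      ((List.ofFn fun j => some (a i j)) ++ [t i])[j]? := by
  have := List.getElem?_flatten_ofFn_sum_Iio_add
    (fun i => (List.ofFn fun j => some (a i j)) ++ [t i]) i (by simpa using hj)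
  simp only [List.length_append, List.length_ofFn, List.length_singleton] at this
  exact this

theorem getElem?_blockStr_muPos (t : Fin δ → Option β) (i : Fin δ) :
    (blockStr a t)[muPos n i]? = some (t i) := by
  rw [muPos, getElem?_blockStr_sum_Iio_add a t i (Nat.lt_succ_self _),
    List.getElem?_append_right (by simp)]
  simp

theorem getElem?_blockStr_of_lt (t : Fin δ → Option β) (i : Fin δ) {j : ℕ} (hj : j < n i) :
    (blockStr a t)[(∑ i' ∈ Iio i, (n i' + 1)) + j]? = some (some (a i ⟨j, hj⟩)) := by
  rw [getElem?_blockStr_sum_Iio_add a t i (by omega),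
    List.getElem?_append_left (by simpa using hj)]
  simp [hj]

theorem muPos_strictMono : StrictMono (muPos n) := by
  intro i i' h
  have hsub : insert i (Iio i) ⊆ Iio i' := by
    intro x hx
    simp only [mem_insert, mem_Iio] at hx ⊢
    rcases hx with rfl | hx
    exacts [h, hx.trans h]
  have := sum_le_sum_of_subset (f := fun i => n i + 1) hsub
  rw [sum_insert (by simp)] at this
  simp only [muPos]
  omega

theorem muPos_lt_length_blockStr (t : Fin δ → Option β) (i : Fin δ) :
    muPos n i < (blockStr a t).length :=
  (List.getElem?_eq_some_iff.mp (getElem?_blockStr_muPos a t i)).1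

theorem hashPos_eq_image_muPos [DecidableEq β] : hashPos a = univ.image (muPos n) := by
  ext p
  rw [hashPos, mem_filter, mem_range, Ystr_eq_blockStr]
  simp only [mem_image, mem_univ, true_and]
  constructor
  · rintro ⟨hp, hnone⟩
    obtain ⟨i, j, hj, rfl⟩ := List.exists_eq_sum_Iio_add_of_lt_length_flatten_ofFn _ hp
    simp only [List.length_append, List.length_ofFn, List.length_singleton] at hj hnone ⊢
    rcases Nat.lt_succ_iff_lt_or_eq.mp hj with hj | rfl
    · rw [getElem?_blockStr_of_lt a _ i hj] at hnone
      simp at hnone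
    · exact ⟨i, rfl⟩
  · rintro ⟨i, rfl⟩
    exact ⟨muPos_lt_length_blockStr a _ i, getElem?_blockStr_muPos a _ i⟩

theorem getD_Zstr_muPos (g : (i : Fin δ) → Fin (n i)) (i : Fin δ) :
    (Zstr a g).getD (muPos n i) none = some (a i (g i)) := by
  rw [List.getD_eq_getElem?_getD, Zstr_eq_blockStr, getElem?_blockStr_muPos, Option.getD_some]

theorem sum_hashPos_getD_Zstr [DecidableEq β] {M : Type*} [AddCommMonoid M]
    (g : (i : Fin δ) → Fin (n i)) (f : ℕ → Option β → M) :
    ∑ p ∈ hashPos a, f p ((Zstr a g).getD p none) = ∑ i, f (muPos n i) (some (a i (g i))) := by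
  simp only [hashPos_eq_image_muPos, getD_Zstr_muPos,
    sum_image fun i _ i' _ h => muPos_strictMono.injective h]

variable {a} [DecidableEq β] (ha : Function.Injective fun p : Σ i : Fin δ, Fin (n i) => a p.1 p.2)
include ha

theorem count_blockStr (t : Fin δ → Option β) (i : Fin δ) (j : Fin (n i)) :
    (blockStr a t).count (some (a i j)) = 1 + #{i' | t i' = some (a i j)} := by
  have hblock : ∀ i', (List.ofFn fun j' => some (a i' j')).count (some (a i j)) =
      if i' = i then 1 else 0 := by
    intro i'
    split_ifs with hi
    · subst hi
      refine List.count_eq_one_of_mem (List.nodup_ofFn.mpr fun x y hxy => ?_) (by simp)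
      simpa using @ha ⟨i', x⟩ ⟨i', y⟩ (Option.some.inj hxy)
    · refine List.count_eq_zero_of_not_mem ?_
      simp only [List.mem_ofFn, Option.some.injEq, not_exists]
      exact fun j' h => hi (congrArg Sigma.fst (@ha ⟨i', j'⟩ ⟨i, j⟩ h))
  simp only [blockStr, List.count_flatten, List.map_ofFn, List.sum_ofFn, Function.comp_def,
    List.count_append, hblock, List.count_singleton, beq_iff_eq, sum_add_distrib,
    sum_ite_eq', mem_univ, if_true, sum_boole, Nat.cast_id]

theorem count_Ystr (i : Fin δ) (j : Fin (n i)) : (Ystr a).count (some (a i j)) = 1 := by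
  simp [Ystr_eq_blockStr, count_blockStr ha]

theorem count_Zstr (g : (i : Fin δ) → Fin (n i)) (i : Fin δ) :
    (Zstr a g).count (some (a i (g i))) = 2 := by
  have hterm : ∀ i', some (a i' (g i')) = some (a i (g i)) ↔ i' = i :=
    fun i' => ⟨fun h => congrArg Sigma.fst (@ha ⟨i', g i'⟩ ⟨i, g i⟩ (Option.some.inj h)),
      by rintro rfl; rfl⟩
  simp [Zstr_eq_blockStr, count_blockStr ha, hterm, filter_eq']

theorem filter_hashPos_ghost_eq (g : (i : Fin δ) → Fin (n i)) :
    (hashPos a).filter (fun p => (Ystr a).count ((Zstr a g).getD p none) < 2 ∧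
      2 ≤ (Zstr a g).count ((Zstr a g).getD p none)) = hashPos a := by
  refine filter_true_of_mem fun p hp => ?_
  obtain ⟨i, -, rfl⟩ := mem_image.mp (hashPos_eq_image_muPos a ▸ hp)
  rw [getD_Zstr_muPos, count_Ystr ha, count_Zstr ha]
  decide

end Reduction

theorem stmt11_general {β : Type*} [DecidableEq β] (δ : ℕ)
    (n : Fin δ → ℕ)
    (a : (i : Fin δ) → Fin (n i) → β)
    (ha : Function.Injective fun p : Σ i : Fin δ, Fin (n i) => a p.1 p.2)
    (g : (i : Fin δ) → Fin (n i))
    (c : (i : Fin δ) → Fin (n i) → ℝ)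
    (w : (i : Fin δ) → Fin (n i) → ℝ) (b : ℝ)
    (Ghost Sub : ℕ → Option β → ℝ)
    (hGhost : ∀ i j, Ghost (muPos n i) (some (a i j)) = c i j)
    (hSub : ∀ i j, Sub (muPos n i) (some (a i j)) = 1 - w i j) :
    -- (a): the ghost set is all of the replaced positions …
    ((hashPos a).filter (fun p =>
        (Ystr a).count ((Zstr a g).getD p none) < 2 ∧
        2 ≤ (Zstr a g).count ((Zstr a g).getD p none)) = hashPos a) ∧
    hashPos a = Finset.image (muPos n) Finset.univ ∧
    -- … and the total ghost cost is `Σ_i c_{i,g(i)}`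
    (∑ p ∈ (hashPos a).filter (fun p =>
        (Ystr a).count ((Zstr a g).getD p none) < 2 ∧
        2 ≤ (Zstr a g).count ((Zstr a g).getD p none)),
      Ghost p ((Zstr a g).getD p none)) = ∑ i, c i (g i) ∧
    -- (b): the total substitution weight
    (∑ p ∈ hashPos a, Sub p ((Zstr a g).getD p none)) = (δ : ℝ) - ∑ i, w i (g i) ∧
    ((∑ p ∈ hashPos a, Sub p ((Zstr a g).getD p none)) ≤ (δ : ℝ) - b ↔
      b ≤ ∑ i, w i (g i)) := by
  have hghost := filter_hashPos_ghost_eq ha g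
  have hsub : ∑ p ∈ hashPos a, Sub p ((Zstr a g).getD p none) = δ - ∑ i, w i (g i) := by
    rw [sum_hashPos_getD_Zstr]
    simp [hSub, Finset.sum_sub_distrib]
  refine ⟨hghost, hashPos_eq_image_muPos a, ?_, hsub, ?_⟩
  · rw [hghost, sum_hashPos_getD_Zstr]
    exact Finset.sum_congr rfl fun i _ => hGhost i (g i)
  · rw [hsub, sub_le_sub_iff_left]

/-- objective-value correspondence in the MCK-to-MCSR reduction: with
`τ = 2`, `θ = δ − b`, `Ghost(μ(i), α_{ij}) = c_{ij}` and `Sub(μ(i), α_{ij}) = 1 − w_{ij}`,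
(a) the set of positions `p` with `Y[p] = #`, `Freq_Y(Z_g[p]) < τ` and
`Freq_{Z_g}(Z_g[p]) ≥ τ` is exactly the set `{μ(1),…,μ(δ)}` of all replaced positions,
and the total ghost cost equals `Σ_i c_{i,g(i)}`;
(b) the total substitution weight equals `δ − Σ_i w_{i,g(i)}`; consequently it is `≤ θ`
iff `Σ_i w_{i,g(i)} ≥ b`. -/
theorem stmt11 {β : Type*} [DecidableEq β] (δ : ℕ) (hδ : 1 ≤ δ)
    (n : Fin δ → ℕ) (hn : ∀ i, 1 ≤ n i)
    (a : (i : Fin δ) → Fin (n i) → β)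
    (ha : Function.Injective fun p : Σ i : Fin δ, Fin (n i) => a p.1 p.2)
    (g : (i : Fin δ) → Fin (n i))
    (c : (i : Fin δ) → Fin (n i) → ℝ) (hc : ∀ i j, 0 ≤ c i j)
    (w : (i : Fin δ) → Fin (n i) → ℝ) (b : ℝ)
    (Ghost Sub : ℕ → Option β → ℝ)
    (hGhost : ∀ i j, Ghost (muPos n i) (some (a i j)) = c i j)
    (hSub : ∀ i j, Sub (muPos n i) (some (a i j)) = 1 - w i j) :
    -- (a): the ghost set is all of the replaced positions …
    ((hashPos a).filter (fun p =>
        (Ystr a).count ((Zstr a g).getD p none) < 2 ∧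
        2 ≤ (Zstr a g).count ((Zstr a g).getD p none)) = hashPos a) ∧
    hashPos a = Finset.image (muPos n) Finset.univ ∧
    -- … and the total ghost cost is `Σ_i c_{i,g(i)}`
    (∑ p ∈ (hashPos a).filter (fun p =>
        (Ystr a).count ((Zstr a g).getD p none) < 2 ∧
        2 ≤ (Zstr a g).count ((Zstr a g).getD p none)),
      Ghost p ((Zstr a g).getD p none)) = ∑ i, c i (g i) ∧
    -- (b): the total substitution weight
    (∑ p ∈ hashPos a, Sub p ((Zstr a g).getD p none)) = (δ : ℝ) - ∑ i, w i (g i) ∧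
    ((∑ p ∈ hashPos a, Sub p ((Zstr a g).getD p none)) ≤ (δ : ℝ) - b ↔
      b ≤ ∑ i, w i (g i)) :=
  stmt11_general δ n a ha g c w b Ghost Sub hGhost hSub
end
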